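/- The Markov chain M on the state space {D_1,…,D_k, L_1,…,L_k} with transition matrix P given by P(L_j, D_i) = w_i/((1+w)n) for all i, j; P(L_i, L_i) = 1 − w/((1+w)n) for all i; P(D_i, L_i) = 1/((1+w)n) for all i; P(D_i, D_i) = 1 − 1/((1+w)n) for all i; and all other entries 0, has stationary distribution π given by π(L_i) = (w_i/w)/(1+w) and π(D_i) = w_i/(1+w); that is, π is a probability distribution and π P = π. -/

import Mathlib

open MeasureTheory ProbabilityTheory Finset Real
open scoped ENNReal Classical

namespace Diversification

/-- A configuration of the Diversification protocol: each of the `n` agents has a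
colour in `Fin k` and a shade bit (`true` = dark, `false` = light). -/
abbrev Conf (n k : ℕ) := Fin n → Fin k × Bool

variable {n k : ℕ}

/-- `C_i`: the number of agents with colour `i` (any shade). -/
def colourCount (s : Conf n k) (i : Fin k) : ℕ :=
  (Finset.univ.filter fun u => (s u).1 = i).card

/-- `A_i`: the number of dark-shaded agents with colour `i`. -/
def darkCount (s : Conf n k) (i : Fin k) : ℕ :=
  (Finset.univ.filter fun u => (s u).1 = i ∧ (s u).2 = true).card

/-- `a_i`: the number of light-shaded agents with colour `i`. -/
def lightCount (s : Conf n k) (i : Fin k) : ℕ :=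
  (Finset.univ.filter fun u => (s u).1 = i ∧ (s u).2 = false).card

/-- `a`: the total number of light-shaded agents. -/
def lightTotal (s : Conf n k) : ℕ := ∑ i, lightCount s i

/-- `A`: the total number of dark-shaded agents. -/
def darkTotal (s : Conf n k) : ℕ := ∑ i, darkCount s i

/-- The agent with index `v` in the enumeration of the `n-1` agents different from `u`. -/
def other (u : Fin n) (v : Fin (n - 1)) : Fin n :=
  if (v : ℕ) < (u : ℕ) then ⟨v, by have := v.isLt; have := u.isLt; omega⟩
  else ⟨(v : ℕ) + 1, by have := v.isLt; have := u.isLt; omega⟩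

/-- One step of the Diversification protocol driven by the random seed `(u, v, r)`:
agent `u` is scheduled and observes agent `other u v` (uniform among the others);
if `u` is light and the observed agent dark, `u` adopts its colour and becomes dark;
if both are dark with the same colour `i`, `u` becomes light iff `r ≤ 1/wᵢ`
(`r` is uniform on `[0,1]`); otherwise nothing changes. -/
noncomputable def step (w : Fin k → ℝ) (s : Conf n k) (q : Fin n × Fin (n - 1) × ℝ) :
    Conf n k :=
  let u := q.1
  let v := other u q.2.1
  let r := q.2.2
  if (s u).2 = false ∧ (s v).2 = true then
    Function.update s u ((s v).1, true)
  else if (s u).2 = true ∧ (s v).2 = true ∧ (s u).1 = (s v).1 ∧ r ≤ 1 / w (s u).1 then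
    Function.update s u ((s u).1, false)
  else s

/-- The trajectory of the protocol from an initial configuration, given the seeds. -/
noncomputable def traj (w : Fin k → ℝ) (init : Conf n k)
    (seeds : ℕ → Fin n × Fin (n - 1) × ℝ) : ℕ → Conf n k
  | 0 => init
  | t + 1 => step w (traj w init seeds t) (seeds t)

/-- The configuration process `ξ(t)` as a function of the random environment. -/
noncomputable def xi {Ω : Type*} (w : Fin k → ℝ) (init : Conf n k)
    (seeds : ℕ → Ω → Fin n × Fin (n - 1) × ℝ) (t : ℕ) (ω : Ω) : Conf n k :=
  traj w init (fun s => seeds s ω) t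

/-- The distribution of one random seed: a uniform agent, a uniform index among the
other `n-1` agents, and an independent uniform real in `[0,1]`. -/
noncomputable def seedMeasure (n : ℕ) (hn : 2 ≤ n) : Measure (Fin n × Fin (n - 1) × ℝ) :=
  haveI : Nonempty (Fin n) := ⟨⟨0, by omega⟩⟩
  haveI : Nonempty (Fin (n - 1)) := ⟨⟨0, by omega⟩⟩
  (PMF.uniformOfFintype (Fin n)).toMeasure.prod
    ((PMF.uniformOfFintype (Fin (n - 1))).toMeasure.prod
      (volume.restrict (Set.Icc (0 : ℝ) 1)))

/-- The random environment driving the protocol: independent seeds, each with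
distribution `seedMeasure`. -/
def IsSeeds {Ω : Type*} [MeasurableSpace Ω] (n : ℕ) (hn : 2 ≤ n) (P : Measure Ω)
    (seeds : ℕ → Ω → Fin n × Fin (n - 1) × ℝ) : Prop :=
  (∀ t, Measurable (seeds t)) ∧
    iIndepFun seeds P ∧
      ∀ t, P.map (seeds t) = seedMeasure n hn

/-- The potential `φ` on dark counts. -/
noncomputable def phi (w : Fin k → ℝ) (s : Conf n k) : ℝ :=
  ∑ i, ∑ j, ((darkCount s i : ℝ) / w i - (darkCount s j : ℝ) / w j) ^ 2

/-- The potential `ψ` on light counts. -/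
noncomputable def psi (w : Fin k → ℝ) (s : Conf n k) : ℝ :=
  ∑ i, ∑ j, ((lightCount s i : ℝ) / w i - (lightCount s j : ℝ) / w j) ^ 2

/-- The potential on total colour counts. -/
noncomputable def potC (w : Fin k → ℝ) (s : Conf n k) : ℝ :=
  ∑ i, ∑ j, ((colourCount s i : ℝ) / w i - (colourCount s j : ℝ) / w j) ^ 2

/-- The set `E(δ)` of well-balanced configurations. -/
def regionE (w : Fin k → ℝ) (δ : ℝ) (s : Conf n k) : Prop :=
  (∀ i, (1 - δ) * n / (1 + ∑ j, w j) ≤ (darkCount s i : ℝ) / w i ∧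
      (darkCount s i : ℝ) / w i ≤ (1 + δ) * n / (1 + ∑ j, w j)) ∧
    ((1 - δ) * n / (1 + ∑ j, w j) ≤ (lightTotal s : ℝ) ∧
      (lightTotal s : ℝ) ≤ (1 + δ) * n / (1 + ∑ j, w j))

/-- Region `R₁ = {a/n ≥ (1-ε)/(w+1)}`. -/
def regionR1 (w : Fin k → ℝ) (ε : ℝ) (s : Conf n k) : Prop :=
  (1 - ε) / ((∑ i, w i) + 1) ≤ (lightTotal s : ℝ) / n

/-- Region `S₁ = {a/n ≥ (1-2ε)/(w+1)}`. -/
def regionS1 (w : Fin k → ℝ) (ε : ℝ) (s : Conf n k) : Prop :=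
  (1 - 2 * ε) / ((∑ i, w i) + 1) ≤ (lightTotal s : ℝ) / n

/-- Region `R₂`. -/
def regionR2 (w : Fin k → ℝ) (ε : ℝ) (s : Conf n k) : Prop :=
  (∀ i, (1 - 3 * ε) * w i / (1 + ∑ j, w j) ≤ (darkCount s i : ℝ) / n) ∧ regionS1 w ε s

/-- Region `S₂`. -/
def regionS2 (w : Fin k → ℝ) (ε : ℝ) (s : Conf n k) : Prop :=
  (∀ i, (1 - 4 * ε) * w i / (1 + ∑ j, w j) ≤ (darkCount s i : ℝ) / n) ∧ regionS1 w ε s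

/-- The natural filtration `F_t` generated by the configurations up to time `t`. -/
noncomputable def confFiltration {Ω : Type*} (w : Fin k → ℝ) (init : Conf n k)
    (seeds : ℕ → Ω → Fin n × Fin (n - 1) × ℝ) (t : ℕ) : MeasurableSpace Ω :=
  ⨆ s ∈ Set.Iic t, MeasurableSpace.comap (xi w init seeds s) ⊤

/-- Conditional variance given a sub-σ-algebra. -/
noncomputable def condVar {Ω : Type*} (m : MeasurableSpace Ω) {m0 : MeasurableSpace Ω}
    (P : Measure Ω) (f : Ω → ℝ) : Ω → ℝ :=
  MeasureTheory.condExp m P fun ω => (f ω - MeasureTheory.condExp m P f ω) ^ 2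

/-! The chain is a block matrix with a single rate `c`: a dark `D_i` turns light (into `L_i`)
with probability `c`, and every light state jumps to `D_i` with probability `c wᵢ`. The dark
state `D_i` is in balance because its outflow `π(D_i) c` equals its inflow
`c wᵢ ∑ⱼ π(L_j) = c wᵢ / (1 + w)`; the light state `L_i` balances by the same identity read
from the other side. -/

open Matrix

section ShadeChain

variable {ι : Type*} [Fintype ι]

noncomputable def shadeStationary (w : ι → ℝ) : ι ⊕ ι → ℝ :=
  Sum.elim (fun i => w i / (1 + ∑ l, w l)) (fun i => w i / (∑ l, w l) / (1 + ∑ l, w l))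

theorem shadeStationary_nonneg {w : ι → ℝ} (hw : ∀ i, 0 ≤ w i) (s : ι ⊕ ι) :
    0 ≤ shadeStationary w s := by
  have hW : 0 ≤ ∑ l, w l := sum_nonneg fun i _ => hw i
  cases s with
  | inl i => exact div_nonneg (hw i) (by linarith)
  | inr i => exact div_nonneg (div_nonneg (hw i) hW) (by linarith)

theorem sum_shadeStationary {w : ι → ℝ} (hW : 0 < ∑ l, w l) :
    ∑ s, shadeStationary w s = 1 := by
  simp only [Fintype.sum_sum_type, shadeStationary, Sum.elim_inl, Sum.elim_inr, ← sum_div]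
  field_simp
  ring

variable [DecidableEq ι]

def shadeChain (w : ι → ℝ) (c : ℝ) : Matrix (ι ⊕ ι) (ι ⊕ ι) ℝ :=
  fromBlocks ((1 - c) • 1) (c • 1) (of fun _ j => w j * c) ((1 - (∑ l, w l) * c) • 1)

theorem eq_shadeChain {w : ι → ℝ} {c : ℝ} {P : Matrix (ι ⊕ ι) (ι ⊕ ι) ℝ}
    (hLD : ∀ i j, P (.inr j) (.inl i) = w i * c)
    (hLL : ∀ i, P (.inr i) (.inr i) = 1 - (∑ l, w l) * c)
    (hDL : ∀ i, P (.inl i) (.inr i) = c)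
    (hDD : ∀ i, P (.inl i) (.inl i) = 1 - c)
    (hzero : ∀ i j, i ≠ j →
      P (.inl i) (.inl j) = 0 ∧ P (.inl i) (.inr j) = 0 ∧ P (.inr i) (.inr j) = 0) :
    P = shadeChain w c := by
  ext (i | i) (j | j) <;> obtain rfl | hij := eq_or_ne i j <;> simp [shadeChain, one_apply, *]

theorem shadeStationary_vecMul_shadeChain {w : ι → ℝ} (hW : ∑ l, w l ≠ 0) (c : ℝ) :
    shadeStationary w ᵥ* shadeChain w c = shadeStationary w := by
  have hlight : ∑ i, w i / (∑ l, w l) / (1 + ∑ l, w l) = 1 / (1 + ∑ l, w l) := by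
    rw [← sum_div, ← sum_div, div_self hW]
  rw [shadeChain, vecMul_fromBlocks]
  simp only [vecMul_smul, vecMul_one]
  ext (j | j)
  · simp only [shadeStationary, Sum.elim_comp_inl, Sum.elim_comp_inr, Sum.elim_inl,
      Pi.add_apply, Pi.smul_apply, smul_eq_mul, vecMul, dotProduct, of_apply, ← sum_mul, hlight]
    ring
  · simp only [shadeStationary, Sum.elim_comp_inl, Sum.elim_comp_inr, Sum.elim_inr,
      Pi.add_apply, Pi.smul_apply, smul_eq_mul]
    field_simp
    ring

end ShadeChain

/-- `D_i` is encoded as `Sum.inl i` and `L_i` as `Sum.inr i`. -/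
theorem stationary_distribution_general (n k : ℕ) (hk : 1 ≤ k)
    (w : Fin k → ℝ) (hw : ∀ i, 1 ≤ w i)
    (P : Fin k ⊕ Fin k → Fin k ⊕ Fin k → ℝ)
    (hLD : ∀ i j : Fin k, P (Sum.inr j) (Sum.inl i) = w i / ((1 + ∑ l, w l) * n))
    (hLL : ∀ i : Fin k, P (Sum.inr i) (Sum.inr i) = 1 - (∑ l, w l) / ((1 + ∑ l, w l) * n))
    (hDL : ∀ i : Fin k, P (Sum.inl i) (Sum.inr i) = 1 / ((1 + ∑ l, w l) * n))
    (hDD : ∀ i : Fin k, P (Sum.inl i) (Sum.inl i) = 1 - 1 / ((1 + ∑ l, w l) * n))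
    (hzero : ∀ i j : Fin k, i ≠ j →
      P (Sum.inl i) (Sum.inl j) = 0 ∧ P (Sum.inl i) (Sum.inr j) = 0 ∧
        P (Sum.inr i) (Sum.inr j) = 0)
    (sd : Fin k ⊕ Fin k → ℝ)
    (hsdD : ∀ i : Fin k, sd (Sum.inl i) = w i / (1 + ∑ l, w l))
    (hsdL : ∀ i : Fin k, sd (Sum.inr i) = (w i / ∑ l, w l) / (1 + ∑ l, w l)) :
    (∀ s, 0 ≤ sd s) ∧ (∑ s, sd s) = 1 ∧ ∀ s', (∑ s, sd s * P s s') = sd s' := by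
  have hW : 0 < ∑ l, w l :=
    sum_pos (fun i _ => one_pos.trans_le (hw i)) (univ_nonempty_iff.2 ⟨⟨0, hk⟩⟩)
  have hP : P = shadeChain w (1 / ((1 + ∑ l, w l) * n)) :=
    eq_shadeChain (fun i j => by rw [hLD, mul_one_div]) (fun i => by rw [hLL, mul_one_div])
      hDL hDD hzero
  have hsd : sd = shadeStationary w := by
    ext (i | i)
    · exact hsdD i
    · exact hsdL i
  subst hP hsd
  exact ⟨shadeStationary_nonneg fun i => zero_le_one.trans (hw i), sum_shadeStationary hW,
    congrFun (shadeStationary_vecMul_shadeChain hW.ne' _)⟩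

/-- the approximating Markov chain on the states
`D_1,…,D_k` (encoded `Sum.inl i`) and `L_1,…,L_k` (encoded `Sum.inr i`) with the
given transition matrix has stationary distribution `π(D_i) = wᵢ/(1+w)`,
`π(L_i) = (wᵢ/w)/(1+w)`. -/
theorem stationary_distribution (n k : ℕ) (hn : 2 ≤ n) (hk : 1 ≤ k)
    (w : Fin k → ℝ) (hw : ∀ i, 1 ≤ w i)
    (hwn : (∑ i, w i) / ((1 + ∑ i, w i) * n) ≤ 1)
    (P : Fin k ⊕ Fin k → Fin k ⊕ Fin k → ℝ)
    (hLD : ∀ i j : Fin k, P (Sum.inr j) (Sum.inl i) = w i / ((1 + ∑ l, w l) * n))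
    (hLL : ∀ i : Fin k, P (Sum.inr i) (Sum.inr i) = 1 - (∑ l, w l) / ((1 + ∑ l, w l) * n))
    (hDL : ∀ i : Fin k, P (Sum.inl i) (Sum.inr i) = 1 / ((1 + ∑ l, w l) * n))
    (hDD : ∀ i : Fin k, P (Sum.inl i) (Sum.inl i) = 1 - 1 / ((1 + ∑ l, w l) * n))
    (hzero : ∀ i j : Fin k, i ≠ j →
      P (Sum.inl i) (Sum.inl j) = 0 ∧ P (Sum.inl i) (Sum.inr j) = 0 ∧
        P (Sum.inr i) (Sum.inr j) = 0)
    (sd : Fin k ⊕ Fin k → ℝ)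
    (hsdD : ∀ i : Fin k, sd (Sum.inl i) = w i / (1 + ∑ l, w l))
    (hsdL : ∀ i : Fin k, sd (Sum.inr i) = (w i / ∑ l, w l) / (1 + ∑ l, w l)) :
    (∀ s, 0 ≤ sd s) ∧ (∑ s, sd s) = 1 ∧ ∀ s', (∑ s, sd s * P s s') = sd s' :=
  stationary_distribution_general n k hk w hw P hLD hLL hDL hDD hzero sd hsdD hsdL

end Diversification
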